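/- Let X be a finite set, α a fixed-point-free involution of X, and ξ a permutation of X commuting with α such that ξ is semi-regular with all ⟨ξ⟩-orbits of the same length k, and such that no ⟨ξ⟩-orbit of X is invariant under α. Then the permutation ξ∘α is semi-regular on X, and its order (equal to the common length of all its orbits) is k if k is even, and 2k if k is odd. -/

import Mathlib

/-- The quadricells of the complete graph `K_n`: pairs `((i,j),ε)` with `i ≠ j`. -/
abbrev Quadricells (n : ℕ) := {x : (Fin n × Fin n) × Bool // x.1.1 ≠ x.1.2}

/-- Negation as a permutation of `Bool`. -/
def boolNeg : Equiv.Perm Bool :=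
  ⟨Bool.not, Bool.not, fun b => by cases b <;> rfl, fun b => by cases b <;> rfl⟩

/-- The involution `α ((i,j),ε) = ((i,j), ¬ε)`. -/
def mapAlpha (n : ℕ) : Equiv.Perm (Quadricells n) :=
  Equiv.Perm.subtypePerm (Equiv.prodCongr (Equiv.refl (Fin n × Fin n)) boolNeg)
    (fun _ => Iff.rfl)

/-- The involution `β ((i,j),ε) = ((j,i), ε)`. -/
def mapBeta (n : ℕ) : Equiv.Perm (Quadricells n) :=
  Equiv.Perm.subtypePerm (Equiv.prodCongr (Equiv.prodComm (Fin n) (Fin n)) (Equiv.refl Bool))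
    (fun _ => ne_comm)

/-- The extended action of `g ∈ S_n` on quadricells: `g* ((i,j),ε) = ((g i, g j), ε)`. -/
def gStar {n : ℕ} (g : Equiv.Perm (Fin n)) : Equiv.Perm (Quadricells n) :=
  Equiv.Perm.subtypePerm (Equiv.prodCongr (Equiv.prodCongr g g) (Equiv.refl Bool))
    (fun _ => g.injective.ne_iff)

/-- The cardinality of the `⟨P⟩`-orbit of `x`. -/
noncomputable def orbLen {X : Type*} (P : Equiv.Perm X) (x : X) : ℕ :=
  Set.ncard {y | ∃ m : ℤ, (P ^ m) x = y}

/-- A complete map of order `n`. -/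
def IsCompleteMap {n : ℕ} (P : Equiv.Perm (Quadricells n)) : Prop :=
  (∀ x : Quadricells n, ((P x : (Fin n × Fin n) × Bool)).1.1 = (x : (Fin n × Fin n) × Bool).1.1) ∧
  mapAlpha n * P * mapAlpha n = P⁻¹ ∧
  (∀ (x : Quadricells n) (m : ℤ), (P ^ m) x ≠ mapAlpha n x) ∧
  (∀ x : Quadricells n, orbLen P x = n - 1)

/-- A complete map is non-orientable when `⟨αβ, P⟩` is transitive on the quadricells. -/
def NonOrientable {n : ℕ} (P : Equiv.Perm (Quadricells n)) : Prop :=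
  ∀ x y : Quadricells n, ∃ σ ∈ Subgroup.closure {mapAlpha n * mapBeta n, P}, σ x = y

/-- `τ` is an automorphism of the map `P`. -/
def IsMapAut {n : ℕ} (P τ : Equiv.Perm (Quadricells n)) : Prop :=
  τ * mapAlpha n = mapAlpha n * τ ∧ τ * mapBeta n = mapBeta n * τ ∧ τ * P * τ⁻¹ = P

/-- Isomorphism of maps on the quadricells of `K_n`. -/
def MapIso {n : ℕ} (P Q : Equiv.Perm (Quadricells n)) : Prop :=
  ∃ τ : Equiv.Perm (Quadricells n),
    τ * mapAlpha n = mapAlpha n * τ ∧ τ * mapBeta n = mapBeta n * τ ∧ τ * P * τ⁻¹ = Q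

/-- The setoid of maps (restricted by a property `Q`) under map isomorphism. -/
def mapSetoid (n : ℕ) (Q : Equiv.Perm (Quadricells n) → Prop) :
    Setoid {P : Equiv.Perm (Quadricells n) // Q P} where
  r P₁ P₂ := MapIso P₁.val P₂.val
  iseqv := by
    constructor
    · intro P
      exact ⟨1, by simp, by simp, by simp⟩
    · rintro P Q ⟨τ, h1, h2, h3⟩
      refine ⟨τ⁻¹, (Commute.inv_left h1 : _), (Commute.inv_left h2 : _), ?_⟩
      rw [← h3]; group
    · rintro P Q R ⟨τ, h1, h2, h3⟩ ⟨σ, g1, g2, g3⟩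
      refine ⟨σ * τ, (Commute.mul_left g1 h1 : _), (Commute.mul_left g2 h2 : _), ?_⟩
      rw [← g3, ← h3]; group

lemma mem_periodicPts_perm {X : Type*} [Fintype X] (P : Equiv.Perm X) (x : X) :
    x ∈ Function.periodicPts ⇑P := by
  refine ⟨orderOf P, orderOf_pos P, ?_⟩
  show (⇑P)^[orderOf P] x = x
  rw [← Equiv.Perm.coe_pow, pow_orderOf_eq_one]
  rfl

lemma orbLen_eq_minimalPeriod {X : Type*} [Fintype X] (P : Equiv.Perm X) (x : X) :
    orbLen P x = Function.minimalPeriod ⇑P x := by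
  have hn : 0 < Function.minimalPeriod ⇑P x :=
    Function.minimalPeriod_pos_of_mem_periodicPts (mem_periodicPts_perm P x)
  have hset : {y | ∃ m : ℤ, (P ^ m) x = y}
      = (fun i => (⇑P)^[i] x) '' Set.Iio (Function.minimalPeriod ⇑P x) := by
    ext y
    constructor
    · rintro ⟨m, rfl⟩
      have hsc : P.SameCycle x ((P ^ m) x) := ⟨m, rfl⟩
      obtain ⟨i, _, hiy⟩ := hsc.exists_pow_eq'
      refine ⟨i % Function.minimalPeriod ⇑P x, Nat.mod_lt _ hn, ?_⟩
      simp only [Function.iterate_mod_minimalPeriod_eq, ← Equiv.Perm.coe_pow] at *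
      exact hiy
    · rintro ⟨i, _, rfl⟩
      exact ⟨(i : ℤ), by rw [zpow_natCast, Equiv.Perm.coe_pow]⟩
  rw [orbLen, hset, Set.ncard_image_of_injOn Function.iterate_injOn_Iio_minimalPeriod]
  rw [← Finset.coe_Iio, Set.ncard_coe_finset, Nat.card_Iio]

lemma perm_isPeriodicPt_iff {X : Type*} (P : Equiv.Perm X) (m : ℕ) (x : X) :
    Function.IsPeriodicPt ⇑P m x ↔ (P ^ m) x = x := by
  rw [Function.IsPeriodicPt, Function.IsFixedPt, ← Equiv.Perm.coe_pow]

/-- If `ξ` commutes with a fixed-point-free involution `a`, is semi-regular with all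
orbits of length `k`, and no `⟨ξ⟩`-orbit is invariant under `a`, then `ξ ∘ a` is
semi-regular of order `k` if `k` is even and `2k` if `k` is odd. -/
theorem semiregular_mul_involution (X : Type*) [Fintype X] [Nonempty X]
    (a : Equiv.Perm X) (ha2 : a * a = 1) (hafix : ∀ x : X, a x ≠ x)
    (xi : Equiv.Perm X) (hcomm : xi * a = a * xi)
    (k : ℕ) (hk : ∀ x : X, orbLen xi x = k)
    (hinv : ∀ (x : X) (m : ℤ), (xi ^ m) x ≠ a x) :
    (∀ x : X, orbLen (xi * a) x = orderOf (xi * a)) ∧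
    orderOf (xi * a) = (if Even k then k else 2 * k) := by
  clear hafix
  set b := xi * a with hb
  set L := if Even k then k else 2 * k with hL
  have hC : Commute xi a := hcomm
  have hminxi : ∀ x : X, Function.minimalPeriod ⇑xi x = k := fun x => by
    rw [← orbLen_eq_minimalPeriod]; exact hk x
  obtain ⟨x₀⟩ := ‹Nonempty X›
  have hkpos : 0 < k := by
    rw [← hminxi x₀]
    exact Function.minimalPeriod_pos_of_mem_periodicPts (mem_periodicPts_perm xi x₀)
  have hkL : k ∣ L := by
    rw [hL]; split
    · exact dvd_rfl
    · exact dvd_mul_left k 2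
  have hLeven : Even L := by
    rw [hL]; split
    · assumption
    · exact even_two_mul k
  have hapow_even : ∀ m : ℕ, Even m → a ^ m = 1 := by
    rintro m ⟨c, rfl⟩
    rw [← two_mul, pow_mul, pow_two, ha2, one_pow]
  have hapow_odd : ∀ m : ℕ, ¬ Even m → a ^ m = a := by
    intro m hm
    obtain ⟨c, rfl⟩ := Nat.not_even_iff_odd.mp hm
    rw [pow_succ, pow_mul, pow_two, ha2, one_pow, one_mul]
  have hbpow : ∀ m : ℕ, b ^ m = xi ^ m * a ^ m := fun m => hC.mul_pow m
  have hper : ∀ (x : X) (m : ℕ), ((b ^ m) x = x ↔ (Even m ∧ k ∣ m)) := by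
    intro x m
    by_cases hm : Even m
    · rw [hbpow, hapow_even m hm, mul_one]
      constructor
      · intro h
        exact ⟨hm, (hminxi x) ▸ ((perm_isPeriodicPt_iff xi m x).mpr h).minimalPeriod_dvd⟩
      · rintro ⟨-, hd⟩
        exact (perm_isPeriodicPt_iff xi m x).mp
          (Function.isPeriodicPt_iff_minimalPeriod_dvd.mpr ((hminxi x) ▸ hd))
    · rw [hbpow, hapow_odd m hm]
      constructor
      · intro h
        exfalso
        apply hinv x (-(m : ℤ))
        have hx : (xi ^ m) (a x) = x := by rwa [Equiv.Perm.mul_apply] at h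
        rw [zpow_neg, zpow_natCast]
        exact Equiv.Perm.inv_eq_iff_eq.mpr hx.symm
      · rintro ⟨he, -⟩
        exact absurd he hm
  have hminb : ∀ x : X, Function.minimalPeriod ⇑b x = L := by
    intro x
    have hbL : (b ^ L) x = x := (hper x L).mpr ⟨hLeven, hkL⟩
    have h1 : Function.minimalPeriod ⇑b x ∣ L :=
      ((perm_isPeriodicPt_iff b L x).mpr hbL).minimalPeriod_dvd
    have hbp : (b ^ Function.minimalPeriod ⇑b x) x = x :=
      (perm_isPeriodicPt_iff _ _ _).mp (Function.isPeriodicPt_minimalPeriod _ _)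
    obtain ⟨hpe, hpk⟩ := (hper x _).mp hbp
    refine Nat.dvd_antisymm h1 ?_
    rw [hL]; split
    · exact hpk
    · rename_i hke
      exact (Nat.coprime_two_left.mpr (Nat.not_even_iff_odd.mp hke)).mul_dvd_of_dvd_of_dvd
        hpe.two_dvd hpk
  have hord : orderOf b = L := by
    have hbL1 : b ^ L = 1 := by
      apply Equiv.ext
      intro x
      rw [Equiv.Perm.one_apply]
      exact (hper x L).mpr ⟨hLeven, hkL⟩
    refine Nat.dvd_antisymm (orderOf_dvd_of_pow_eq_one hbL1) ?_
    rw [← hminb x₀]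
    refine ((perm_isPeriodicPt_iff b _ x₀).mpr ?_).minimalPeriod_dvd
    rw [pow_orderOf_eq_one]
    rfl
  refine ⟨fun x => ?_, hord⟩
  rw [orbLen_eq_minimalPeriod, hminb, hord]
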